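/- For every positive integer r, -∫₀¹∫₀¹ xʳyʳ ln(xy)/(1-xy) dx dy = 2ζ(3) - 2∑_{m=1}^{r} 1/m³. -/

import Mathlib

open Real MeasureTheory Set Function
open scoped ENNReal

/-!
Expanding `1 / (1 - xy)` as a geometric series and writing `-log (xy) = -log x - log y`, the
integrand becomes `∑_{k ≥ r} (xy)^k (-log x - log y)`, a series of nonnegative terms, so by
Tonelli it may be integrated termwise. Since `∫₀¹ x^k = 1/(k+1)` and `∫₀¹ x^k (-log x) = 1/(k+1)²`,
the `k`-th term contributes `2/(k+1)³`, and the sum over `k ≥ r` is the tail of `2 ζ(3)`.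
-/

lemma intervalIntegrable_pow_mul_log (k : ℕ) (a b : ℝ) :
    IntervalIntegrable (fun x => x ^ k * log x) volume a b :=
  intervalIntegral.intervalIntegrable_log'.continuousOn_mul (continuous_pow k).continuousOn

lemma integral_pow_mul_log (k : ℕ) :
    ∫ x in (0 : ℝ)..1, x ^ k * log x = -(1 / ((k : ℝ) + 1) ^ 2) := by
  set F : ℝ → ℝ := fun x => x ^ (k + 1) * log x / (k + 1) - x ^ (k + 1) / ((k : ℝ) + 1) ^ 2
  have hF : Continuous F := by
    have : Continuous fun x : ℝ => x ^ (k + 1) * log x :=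
      ((continuous_pow k).mul continuous_mul_log).congr fun x => by
        simp only [Pi.mul_apply]
        ring
    fun_prop
  have hF' : ∀ x ∈ Ioo (0 : ℝ) 1, HasDerivAt F (x ^ k * log x) x := by
    intro x hx
    refine ((((hasDerivAt_pow (k + 1) x).mul (hasDerivAt_log hx.1.ne')).div_const
      ((k : ℝ) + 1)).sub ((hasDerivAt_pow (k + 1) x).div_const (((k : ℝ) + 1) ^ 2))).congr_deriv ?_
    have hx0 : x ≠ 0 := hx.1.ne'
    simp only [Nat.add_sub_cancel]
    push_cast
    field_simp
    ring
  rw [intervalIntegral.integral_eq_sub_of_hasDerivAt_of_le zero_le_one hF.continuousOn hF'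
    (intervalIntegrable_pow_mul_log k 0 1)]
  simp [F]

lemma intervalIntegral_eq_setIntegral_Ioo {a b : ℝ} (hab : a ≤ b) (f : ℝ → ℝ) :
    ∫ x in a..b, f x = ∫ x in Ioo a b, f x := by
  rw [intervalIntegral.integral_of_le hab, integral_Ioc_eq_integral_Ioo]

lemma lintegral_Ioo_ofReal_eq_ofReal_intervalIntegral {f : ℝ → ℝ} {a b : ℝ} (hab : a ≤ b)
    (hf : IntervalIntegrable f volume a b) (hnn : ∀ x ∈ Ioo a b, 0 ≤ f x) :
    ∫⁻ x in Ioo a b, ENNReal.ofReal (f x) = ENNReal.ofReal (∫ x in a..b, f x) := by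
  rw [intervalIntegral_eq_setIntegral_Ioo hab, ofReal_integral_eq_lintegral_ofReal]
  · exact ((intervalIntegrable_iff_integrableOn_Ioc_of_le hab).mp hf).mono_set Ioo_subset_Ioc_self
  · exact (ae_restrict_mem measurableSet_Ioo).mono hnn

lemma lintegral_Ioo_ofReal_pow (k : ℕ) :
    ∫⁻ x in Ioo (0 : ℝ) 1, ENNReal.ofReal (x ^ k) = ENNReal.ofReal (1 / ((k : ℝ) + 1)) := by
  rw [lintegral_Ioo_ofReal_eq_ofReal_intervalIntegral zero_le_one
    ((continuous_pow k).intervalIntegrable 0 1) fun x hx => pow_nonneg hx.1.le k]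
  simp

lemma lintegral_Ioo_ofReal_pow_mul_neg_log (k : ℕ) :
    ∫⁻ x in Ioo (0 : ℝ) 1, ENNReal.ofReal (x ^ k * -log x) =
      ENNReal.ofReal (1 / ((k : ℝ) + 1) ^ 2) := by
  simp_rw [mul_neg]
  rw [lintegral_Ioo_ofReal_eq_ofReal_intervalIntegral (f := fun x => -(x ^ k * log x)) zero_le_one
    (intervalIntegrable_pow_mul_log k 0 1).neg fun x hx =>
      neg_nonneg.mpr (mul_nonpos_of_nonneg_of_nonpos (pow_nonneg hx.1.le k)
        (log_nonpos hx.1.le hx.2.le)),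
    intervalIntegral.integral_neg, integral_pow_mul_log, neg_neg]

theorem lintegral_lintegral_tsum {α β ι : Type*} [MeasurableSpace α] [MeasurableSpace β]
    [Countable ι] {μ : Measure α} {ν : Measure β} [SFinite ν] {f : ι → α → β → ℝ≥0∞}
    (hf : ∀ i, Measurable (uncurry (f i))) :
    ∫⁻ x, ∫⁻ y, ∑' i, f i x y ∂ν ∂μ = ∑' i, ∫⁻ x, ∫⁻ y, f i x y ∂ν ∂μ := by
  have hinner (x : α) : ∫⁻ y, ∑' i, f i x y ∂ν = ∑' i, ∫⁻ y, f i x y ∂ν :=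
    lintegral_tsum fun i => ((hf i).comp measurable_prodMk_left).aemeasurable
  simp_rw [hinner]
  exact lintegral_tsum fun i => (hf i).lintegral_prod_right'.aemeasurable

theorem integral_integral_eq_toReal_lintegral_lintegral {α β : Type*} [MeasurableSpace α]
    [MeasurableSpace β] {μ : Measure α} {ν : Measure β} [SFinite ν] {f : α → β → ℝ}
    (hf : Measurable (uncurry f)) (hnn : ∀ᵐ x ∂μ, 0 ≤ᵐ[ν] f x)
    (hfin : ∫⁻ x, ∫⁻ y, ENNReal.ofReal (f x y) ∂ν ∂μ ≠ ∞) :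
    ∫ x, ∫ y, f x y ∂ν ∂μ = (∫⁻ x, ∫⁻ y, ENNReal.ofReal (f x y) ∂ν ∂μ).toReal := by
  have hmeas : Measurable fun x => ∫⁻ y, ENNReal.ofReal (f x y) ∂ν :=
    hf.ennreal_ofReal.lintegral_prod_right'
  rw [← integral_toReal hmeas.aemeasurable (ae_lt_top hmeas hfin)]
  refine integral_congr_ae (hnn.mono fun x hx => ?_)
  exact integral_eq_lintegral_of_nonneg_ae hx (hf.comp measurable_prodMk_left).aestronglyMeasurable

lemma hasSum_pow_add_mul_geometric {t : ℝ} (h0 : 0 ≤ t) (h1 : t < 1) (r : ℕ) (c : ℝ) :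
    HasSum (fun n => t ^ (n + r) * c) (t ^ r * c / (1 - t)) := by
  rw [div_eq_mul_inv]
  exact ((hasSum_geometric_of_lt_one h0 h1).mul_left (t ^ r * c)).congr_fun fun n => by ring

/-- `(xy)^k (-log x - log y)`, split into products of a function of `x` and a function of `y`
so that each double integral factors. -/
noncomputable def beukersSummand (k : ℕ) (x y : ℝ) : ℝ≥0∞ :=
  ENNReal.ofReal (x ^ k * -log x) * ENNReal.ofReal (y ^ k) +
    ENNReal.ofReal (x ^ k) * ENNReal.ofReal (y ^ k * -log y)

lemma measurable_beukersSummand (k : ℕ) : Measurable (uncurry (beukersSummand k)) := by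
  unfold beukersSummand; fun_prop

lemma hasSum_beukers_integrand (r : ℕ) {x y : ℝ} (hx : x ∈ Ioo (0 : ℝ) 1)
    (hy : y ∈ Ioo (0 : ℝ) 1) :
    HasSum (fun n => (x * y) ^ (n + r) * (-log x + -log y))
      (-(x ^ r * y ^ r * log (x * y) / (1 - x * y))) := by
  obtain ⟨hx0, hx1⟩ := hx
  obtain ⟨hy0, hy1⟩ := hy
  convert hasSum_pow_add_mul_geometric (mul_pos hx0 hy0).le (by nlinarith) r (-log x + -log y)
    using 1
  rw [log_mul hx0.ne' hy0.ne', mul_pow]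
  ring

lemma beukers_integrand_nonneg (r : ℕ) {x y : ℝ} (hx : x ∈ Ioo (0 : ℝ) 1)
    (hy : y ∈ Ioo (0 : ℝ) 1) : 0 ≤ -(x ^ r * y ^ r * log (x * y) / (1 - x * y)) :=
  (hasSum_beukers_integrand r hx hy).nonneg fun _ =>
    mul_nonneg (pow_nonneg (mul_pos hx.1 hy.1).le _)
      (add_nonneg (neg_nonneg.mpr (log_nonpos hx.1.le hx.2.le))
        (neg_nonneg.mpr (log_nonpos hy.1.le hy.2.le)))

lemma ofReal_beukers_integrand_eq_tsum (r : ℕ) {x y : ℝ} (hx : x ∈ Ioo (0 : ℝ) 1)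
    (hy : y ∈ Ioo (0 : ℝ) 1) :
    ENNReal.ofReal (-(x ^ r * y ^ r * log (x * y) / (1 - x * y))) =
      ∑' n, beukersSummand (n + r) x y := by
  have hsum := hasSum_beukers_integrand r hx hy
  obtain ⟨hx0, hx1⟩ := hx
  obtain ⟨hy0, hy1⟩ := hy
  have hlx : 0 ≤ -log x := neg_nonneg.mpr (log_nonpos hx0.le hx1.le)
  have hly : 0 ≤ -log y := neg_nonneg.mpr (log_nonpos hy0.le hy1.le)
  rw [← hsum.tsum_eq, ENNReal.ofReal_tsum_of_nonneg (fun n => by positivity) hsum.summable]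
  refine tsum_congr fun n => ?_
  rw [beukersSummand, ← ENNReal.ofReal_mul (by positivity), ← ENNReal.ofReal_mul (by positivity),
    ← ENNReal.ofReal_add (by positivity) (by positivity)]
  congr 1
  ring

lemma lintegral_lintegral_beukersSummand (k : ℕ) :
    ∫⁻ x in Ioo (0 : ℝ) 1, ∫⁻ y in Ioo (0 : ℝ) 1, beukersSummand k x y =
      ENNReal.ofReal (2 / ((k : ℝ) + 1) ^ 3) := by
  have hpow : Measurable fun x : ℝ => ENNReal.ofReal (x ^ k) := by fun_prop
  have hlog : Measurable fun x : ℝ => ENNReal.ofReal (x ^ k * -log x) := by fun_prop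
  simp only [beukersSummand]
  simp_rw [lintegral_add_left (hpow.const_mul _), lintegral_const_mul _ hpow,
    lintegral_const_mul _ hlog]
  rw [lintegral_add_left (hlog.mul_const _), lintegral_mul_const _ hlog,
    lintegral_mul_const _ hpow, lintegral_Ioo_ofReal_pow, lintegral_Ioo_ofReal_pow_mul_neg_log,
    ← ENNReal.ofReal_mul (by positivity), ← ENNReal.ofReal_mul (by positivity),
    ← ENNReal.ofReal_add (by positivity) (by positivity)]
  congr 1
  field_simp
  ring

lemma summable_one_div_succ_pow_three : Summable fun n : ℕ => 1 / ((n : ℝ) + 1) ^ 3 := by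
  exact_mod_cast (summable_nat_add_iff 1).mpr (Real.summable_one_div_nat_pow.mpr (by norm_num))

lemma lintegral_lintegral_beukers_integrand (r : ℕ) :
    ∫⁻ x in Ioo (0 : ℝ) 1, ∫⁻ y in Ioo (0 : ℝ) 1,
        ENNReal.ofReal (-(x ^ r * y ^ r * log (x * y) / (1 - x * y))) =
      ENNReal.ofReal (∑' n : ℕ, 2 / (((n + r : ℕ) : ℝ) + 1) ^ 3) := by
  calc _ = ∫⁻ x in Ioo (0 : ℝ) 1, ∫⁻ y in Ioo (0 : ℝ) 1, ∑' n, beukersSummand (n + r) x y :=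
        setLIntegral_congr_fun measurableSet_Ioo fun x hx =>
          setLIntegral_congr_fun measurableSet_Ioo fun y hy =>
            ofReal_beukers_integrand_eq_tsum r hx hy
    _ = ∑' n : ℕ, ENNReal.ofReal (2 / (((n + r : ℕ) : ℝ) + 1) ^ 3) := by
        rw [lintegral_lintegral_tsum fun n => measurable_beukersSummand (n + r)]
        exact tsum_congr fun n => lintegral_lintegral_beukersSummand (n + r)
    _ = _ := (ENNReal.ofReal_tsum_of_nonneg (fun n => by positivity)
        ((((summable_nat_add_iff r).mpr summable_one_div_succ_pow_three).mul_left 2).congr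
          fun n => mul_one_div _ _)).symm

lemma Finset.sum_Icc_one_eq_sum_range {M : Type*} [AddCommMonoid M] (f : ℕ → M) (r : ℕ) :
    ∑ m ∈ Finset.Icc 1 r, f m = ∑ i ∈ Finset.range r, f (i + 1) := by
  rw [Finset.range_eq_Ico, Finset.sum_Ico_add', zero_add, Finset.Ico_add_one_right_eq_Icc]

lemma tsum_two_div_nat_add_succ_pow_three (r : ℕ) :
    ∑' n : ℕ, 2 / (((n + r : ℕ) : ℝ) + 1) ^ 3 =
      2 * (∑' n : ℕ, 1 / ((n : ℝ) + 1) ^ 3) - 2 * ∑ m ∈ Finset.Icc 1 r, 1 / (m : ℝ) ^ 3 := by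
  simp_rw [← mul_one_div (2 : ℝ), tsum_mul_left]
  rw [← summable_one_div_succ_pow_three.sum_add_tsum_nat_add r, Finset.sum_Icc_one_eq_sum_range]
  push_cast
  ring

theorem beukers_Jrr_general (r : ℕ) :
    -(∫ x in (0:ℝ)..1, ∫ y in (0:ℝ)..1, x ^ r * y ^ r * Real.log (x * y) / (1 - x * y)) =
      2 * (∑' n : ℕ, 1 / ((n : ℝ) + 1) ^ 3) - 2 * ∑ m ∈ Finset.Icc 1 r, 1 / (m : ℝ) ^ 3 := by
  have hnn : ∀ᵐ x ∂volume.restrict (Ioo (0 : ℝ) 1), ∀ᵐ y ∂volume.restrict (Ioo (0 : ℝ) 1),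
      0 ≤ -(x ^ r * y ^ r * log (x * y) / (1 - x * y)) := by
    filter_upwards [ae_restrict_mem measurableSet_Ioo] with x hx
    filter_upwards [ae_restrict_mem measurableSet_Ioo] with y hy
    exact beukers_integrand_nonneg r hx hy
  simp_rw [intervalIntegral_eq_setIntegral_Ioo zero_le_one, ← integral_neg]
  rw [integral_integral_eq_toReal_lintegral_lintegral (by fun_prop) hnn,
    lintegral_lintegral_beukers_integrand, ENNReal.toReal_ofReal,
    tsum_two_div_nat_add_succ_pow_three]
  · exact tsum_nonneg fun n => by positivity
  · rw [lintegral_lintegral_beukers_integrand]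
    exact ENNReal.ofReal_ne_top

theorem beukers_Jrr (r : ℕ) (hr : 0 < r) :
    -(∫ x in (0:ℝ)..1, ∫ y in (0:ℝ)..1, x ^ r * y ^ r * Real.log (x * y) / (1 - x * y)) =
      2 * (∑' n : ℕ, 1 / ((n : ℝ) + 1) ^ 3) - 2 * ∑ m ∈ Finset.Icc 1 r, 1 / (m : ℝ) ^ 3 :=
  beukers_Jrr_general r
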